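/- Let h be convex (not necessarily strictly) and increasing, c(x,y) = h(d(x,y)) with d the geodesic circle distance, and let x_1,...,x_P, y_1,...,y_P be pairwise distinct points on the circle. Then there exists a permutation σ minimizing Σ_k c(x_k, y_{σ(k)}) and a point x_k such that for all l ≠ k, x_k ∉ γ(x_l, y_{σ(l)}). -/
import Mathlib


open Finset

/-- Geodesic distance on the circle `ℝ/ℤ` (perimeter 1), points represented by reals. -/
noncomputable def circDist (x y : ℝ) : ℝ := min (Int.fract (y - x)) (Int.fract (x - y))

/-- The geodesic arc `γ(x,y)` is *positive* if it runs counterclockwise from `x` to `y`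
(antipodal pairs are assigned the counterclockwise arc). -/
def posPath (x y : ℝ) : Prop := Int.fract (y - x) ≤ 1 / 2

/-- `z` belongs to the *open* geodesic arc `γ(x,y)` from `x` to `y` on the circle `ℝ/ℤ`
(the counterclockwise arc being chosen when `x` and `y` are antipodal). -/
def inArc (x y z : ℝ) : Prop :=
  (Int.fract (y - x) ≤ 1 / 2 ∧
    0 < Int.fract (z - x) ∧ Int.fract (z - x) < Int.fract (y - x)) ∨
  (1 / 2 < Int.fract (y - x) ∧
    0 < Int.fract (z - y) ∧ Int.fract (z - y) < Int.fract (x - y))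



lemma circDist_nonneg (x y : ℝ) : 0 ≤ circDist x y :=
  le_min (Int.fract_nonneg _) (Int.fract_nonneg _)

lemma fract_sub_of_lt {a b : ℝ} (h0 : 0 < Int.fract b) (h : Int.fract b < Int.fract a) :
    Int.fract (a - b) = Int.fract a - Int.fract b := by
  have key : a - b = (Int.fract a - Int.fract b) + ((⌊a⌋ - ⌊b⌋ : ℤ) : ℝ) := by
    rw [Int.fract, Int.fract]; push_cast; ring
  rw [key, Int.fract_add_intCast]
  exact Int.fract_eq_self.mpr ⟨by linarith, by linarith [Int.fract_lt_one a]⟩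

lemma circDist_lt_of_inArc {x y z : ℝ} (hz : inArc x y z) : circDist z y < circDist x y := by
  rcases hz with ⟨h1, h2, h3⟩ | ⟨h1, h2, h3⟩
  · have hyx0 : 0 < Int.fract (y - x) := lt_trans h2 h3
    have hxy : Int.fract (x - y) = 1 - Int.fract (y - x) := by
      have := Int.fract_neg (x := y - x) (by positivity)
      simpa [neg_sub] using this
    have hdxy : circDist x y = Int.fract (y - x) := by
      unfold circDist; rw [hxy]; exact min_eq_left (by linarith)
    have hyz : Int.fract (y - z) = Int.fract (y - x) - Int.fract (z - x) := by
      have e : y - z = (y - x) - (z - x) := by ring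
      rw [e, fract_sub_of_lt h2 h3]
    calc circDist z y ≤ Int.fract (y - z) := min_le_left _ _
      _ < Int.fract (y - x) := by rw [hyz]; linarith
      _ = circDist x y := hdxy.symm
  · have hyx0 : 0 < Int.fract (y - x) := by linarith
    have hxy : Int.fract (x - y) = 1 - Int.fract (y - x) := by
      have := Int.fract_neg (x := y - x) (by positivity)
      simpa [neg_sub] using this
    have hdxy : circDist x y = Int.fract (x - y) := by
      unfold circDist; rw [hxy]; exact min_eq_right (by linarith)
    calc circDist z y ≤ Int.fract (z - y) := min_le_right _ _
      _ < Int.fract (x - y) := h3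
      _ = circDist x y := hdxy.symm

theorem exists_optimal_perm_and_point_outside_all_paths (P : ℕ)
    (h : ℝ → ℝ) (hconv : ConvexOn ℝ (Set.Ici 0) h)
    (hmono : MonotoneOn h (Set.Ici 0))
    (x y : Fin P → ℝ)
    (hx : ∀ k, x k ∈ Set.Ico (0:ℝ) 1) (hy : ∀ k, y k ∈ Set.Ico (0:ℝ) 1)
    (hxinj : ∀ k l, k ≠ l → x k ≠ x l) (hyinj : ∀ k l, k ≠ l → y k ≠ y l)
    (hxy : ∀ k l, x k ≠ y l)
    (hP : 0 < P) :
    ∃ σ : Equiv.Perm (Fin P),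
      (∀ τ : Equiv.Perm (Fin P),
        ∑ k, h (circDist (x k) (y (σ k))) ≤ ∑ k, h (circDist (x k) (y (τ k)))) ∧
      ∃ k : Fin P, ∀ l : Fin P, l ≠ k → ¬ inArc (x l) (y (σ l)) (x k) := by
  classical
  set cost : Equiv.Perm (Fin P) → ℝ := fun τ => ∑ k, h (circDist (x k) (y (τ k))) with hcostdef
  set len : Equiv.Perm (Fin P) → ℝ := fun τ => ∑ k, circDist (x k) (y (τ k)) with hlendef
  obtain ⟨σ0, -, hσ0⟩ := Finset.exists_min_image Finset.univ cost ⟨1, Finset.mem_univ 1⟩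
  obtain ⟨σ, hσT, hσmin⟩ := Finset.exists_min_image
    (Finset.univ.filter fun τ => cost τ ≤ cost σ0) len
    ⟨σ0, by simp⟩
  have hσcost : cost σ ≤ cost σ0 := (Finset.mem_filter.mp hσT).2
  refine ⟨σ, fun τ => le_trans hσcost (hσ0 τ (Finset.mem_univ τ)), ?_⟩
  by_contra hcon
  push_neg at hcon
  -- hcon : ∀ k, ∃ l, l ≠ k ∧ inArc (x l) (y (σ l)) (x k)
  choose f hf1 hf2 using hcon
  -- find a periodic point of f
  set k0 : Fin P := ⟨0, hP⟩
  obtain ⟨i, j, hij, hijeq⟩ := Finite.exists_ne_map_eq_of_infinite (fun n : ℕ => f^[n] k0)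
  wlog hlt : i < j generalizing i j
  · exact this j i hij.symm hijeq.symm ((hij.lt_or_gt).resolve_left hlt)
  set m : Fin P := f^[i] k0 with hm
  set q : ℕ := j - i with hq
  have hq0 : 0 < q := Nat.sub_pos_of_lt hlt
  have hper : f^[q] m = m := by
    have : f^[q + i] k0 = f^[j] k0 := by rw [hq, Nat.sub_add_cancel hlt.le]
    rw [Function.iterate_add_apply] at this
    simpa [hm] using this.trans hijeq.symm
  set C : Finset (Fin P) := (Finset.range q).image (fun t => f^[t] m) with hC
  have hmC : m ∈ C := by
    refine Finset.mem_image.mpr ⟨0, Finset.mem_range.mpr hq0, rfl⟩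
  have hfC : ∀ k ∈ C, f k ∈ C := by
    intro k hk
    obtain ⟨t, ht, rfl⟩ := Finset.mem_image.mp hk
    rw [Finset.mem_range] at ht
    rcases eq_or_lt_of_le (Nat.succ_le_of_lt ht) with he | hl
    · have : f (f^[t] m) = m := by
        rw [← Function.iterate_succ_apply' f t m, he, hper]
      rw [this]; exact hmC
    · exact Finset.mem_image.mpr ⟨t + 1, Finset.mem_range.mpr hl,
        Function.iterate_succ_apply' f t m⟩
  -- the modified map g
  set g : Fin P → Fin P := fun k => if k ∈ C then f k else k with hg
  have hgsurj : Function.Surjective g := by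
    intro b
    by_cases hb : b ∈ C
    · obtain ⟨t, ht, rfl⟩ := Finset.mem_image.mp hb
      rw [Finset.mem_range] at ht
      rcases Nat.eq_zero_or_pos t with rfl | ht0
      · refine ⟨f^[q - 1] m, ?_⟩
        have hmem : f^[q - 1] m ∈ C :=
          Finset.mem_image.mpr ⟨q - 1, Finset.mem_range.mpr (Nat.sub_lt hq0 one_pos), rfl⟩
        have : f (f^[q - 1] m) = m := by
          rw [← Function.iterate_succ_apply' f (q - 1) m, Nat.succ_eq_add_one, Nat.sub_add_cancel hq0, hper]
        simp only [hg, if_pos hmem, this, Function.iterate_zero_apply]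
      · refine ⟨f^[t - 1] m, ?_⟩
        have hmem : f^[t - 1] m ∈ C :=
          Finset.mem_image.mpr ⟨t - 1, Finset.mem_range.mpr (lt_trans (Nat.sub_lt ht0 one_pos) ht), rfl⟩
        have : f (f^[t - 1] m) = f^[t] m := by
          rw [← Function.iterate_succ_apply' f (t - 1) m, Nat.succ_eq_add_one, Nat.sub_add_cancel ht0]
        simp only [hg, if_pos hmem, this]
    · exact ⟨b, by simp only [hg, if_neg hb]⟩
  have hgbij : Function.Bijective g := Finite.surjective_iff_bijective.mp hgsurj
  set G : Equiv.Perm (Fin P) := Equiv.ofBijective g hgbij with hG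
  set τ : Equiv.Perm (Fin P) := G.trans σ with hτ
  have hτapp : ∀ k, τ k = σ (g k) := fun k => rfl
  -- image of C under g is C
  have hgC : C.image g = C := by
    apply Finset.eq_of_subset_of_card_le
    · intro b hb
      obtain ⟨a, ha, rfl⟩ := Finset.mem_image.mp hb
      simp only [hg, if_pos ha]
      exact hfC a ha
    · rw [Finset.card_image_of_injective _ hgbij.injective]
  -- key pointwise strict inequality
  have hkey : ∀ k, circDist (x k) (y (σ (f k))) < circDist (x (f k)) (y (σ (f k))) :=
    fun k => circDist_lt_of_inArc (hf2 k)
  -- reindexing sums over C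
  have hre : ∀ w : Fin P → ℝ, ∑ k ∈ C, w (g k) = ∑ k ∈ C, w k := by
    intro w
    have e := Finset.sum_image (s := C) (g := g) (f := w)
      (fun a _ b _ hab => hgbij.injective hab)
    rw [hgC] at e
    exact e.symm
  have hsplit : ∀ w : Fin P → ℝ, ∑ k, w k = ∑ k ∈ C, w k + ∑ k ∈ Finset.univ \ C, w k := by
    intro w
    rw [add_comm, Finset.sum_sdiff (Finset.subset_univ C)]
  -- length strictly decreases
  have hlen : len τ < len σ := by
    rw [hlendef]
    simp only
    rw [hsplit (fun k => circDist (x k) (y (τ k))), hsplit (fun k => circDist (x k) (y (σ k)))]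
    have h2 : ∑ k ∈ Finset.univ \ C, circDist (x k) (y (τ k))
        = ∑ k ∈ Finset.univ \ C, circDist (x k) (y (σ k)) := by
      apply Finset.sum_congr rfl
      intro k hk
      have : k ∉ C := (Finset.mem_sdiff.mp hk).2
      rw [hτapp]
      simp only [hg, if_neg this]
    have h1 : ∑ k ∈ C, circDist (x k) (y (τ k)) < ∑ k ∈ C, circDist (x k) (y (σ k)) := by
      calc ∑ k ∈ C, circDist (x k) (y (τ k))
          < ∑ k ∈ C, circDist (x (g k)) (y (σ (g k))) := by
            apply Finset.sum_lt_sum_of_nonempty ⟨m, hmC⟩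
            intro k hk
            rw [hτapp]
            simp only [hg, if_pos hk]
            exact hkey k
        _ = ∑ k ∈ C, circDist (x k) (y (σ k)) := hre (fun k => circDist (x k) (y (σ k)))
    linarith
  -- cost does not increase
  have hcost : cost τ ≤ cost σ := by
    rw [hcostdef]
    simp only
    rw [hsplit (fun k => h (circDist (x k) (y (τ k)))),
      hsplit (fun k => h (circDist (x k) (y (σ k))))]
    have h2 : ∑ k ∈ Finset.univ \ C, h (circDist (x k) (y (τ k)))
        = ∑ k ∈ Finset.univ \ C, h (circDist (x k) (y (σ k))) := by
      apply Finset.sum_congr rfl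
      intro k hk
      have : k ∉ C := (Finset.mem_sdiff.mp hk).2
      rw [hτapp]
      simp only [hg, if_neg this]
    have h1 : ∑ k ∈ C, h (circDist (x k) (y (τ k))) ≤ ∑ k ∈ C, h (circDist (x k) (y (σ k))) := by
      calc ∑ k ∈ C, h (circDist (x k) (y (τ k)))
          ≤ ∑ k ∈ C, h (circDist (x (g k)) (y (σ (g k)))) := by
            apply Finset.sum_le_sum
            intro k hk
            rw [hτapp]
            simp only [hg, if_pos hk]
            exact hmono (circDist_nonneg _ _) (circDist_nonneg _ _) (hkey k).le
        _ = ∑ k ∈ C, h (circDist (x k) (y (σ k))) := hre (fun k => h (circDist (x k) (y (σ k))))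
    linarith
  have hτT : τ ∈ Finset.univ.filter fun ρ => cost ρ ≤ cost σ0 :=
    Finset.mem_filter.mpr ⟨Finset.mem_univ _, le_trans hcost hσcost⟩
  exact absurd (hσmin τ hτT) (not_le.mpr hlen)
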